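/- Let n be a positive integer. If a Boolean algebra A is n-free over X (X generates A and every n-preserving function from X into any nontrivial Boolean algebra extends to a homomorphism), then the set of nonzero elements of X is n-independent. -/

import Mathlib

open scoped Classical

variable {A : Type*}

/-- ω-independence: `⊥ ∉ X`, (⊥1), (⊥3). -/
def OmegaIndep [BooleanAlgebra A] (X : Set A) : Prop :=
  (⊥ : A) ∉ X ∧
  (∀ F : Finset A, F.Nonempty → ↑F ⊆ X → F.sup id ≠ ⊤) ∧
  (∀ F G : Finset A, F.Nonempty → G.Nonempty → ↑F ⊆ X → ↑G ⊆ X →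
      F.inf id ≠ ⊥ → F.inf id ≤ G.sup id → (F ∩ G).Nonempty)

/-- n-independence: `⊥ ∉ X`, (⊥1), (⊥2)_n, (⊥3); `n = ⊤` codes ω. -/
def NIndep [BooleanAlgebra A] (n : ℕ∞) (X : Set A) : Prop :=
  (⊥ : A) ∉ X ∧
  (∀ F : Finset A, F.Nonempty → ↑F ⊆ X → F.sup id ≠ ⊤) ∧
  (∀ F : Finset A, F.Nonempty → ↑F ⊆ X → F.inf id = ⊥ →
      ∃ F' ⊆ F, (F'.card : ℕ∞) ≤ n ∧ F'.inf id = ⊥) ∧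
  (∀ F G : Finset A, F.Nonempty → G.Nonempty → ↑F ⊆ X → ↑G ⊆ X →
      F.inf id ≠ ⊥ → F.inf id ≤ G.sup id → (F ∩ G).Nonempty)

/-- Elementary product `∏_{x ∈ R} x^{ε x}`. -/
def elemProd [BooleanAlgebra A] (R : Finset A) (ε : A → Bool) : A :=
  R.inf (fun x => if ε x then x else xᶜ)

/-- `f` is n-preserving on `X` (`n = ⊤` codes ω-preserving). -/
def NPreserving [BooleanAlgebra A] {B : Type*} [BooleanAlgebra B]
    (n : ℕ∞) (X : Set A) (f : A → B) : Prop :=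
  ∀ F : Finset A, ↑F ⊆ X → (F.card : ℕ∞) ≤ n → F.inf id = ⊥ → F.inf f = ⊥

/-- Membership in the subalgebra generated by `X`. -/
inductive Gen [BooleanAlgebra A] (X : Set A) : A → Prop
  | of {x : A} : x ∈ X → Gen X x
  | bot : Gen X ⊥
  | top : Gen X ⊤
  | inf {x y : A} : Gen X x → Gen X y → Gen X (x ⊓ y)
  | sup {x y : A} : Gen X x → Gen X y → Gen X (x ⊔ y)
  | compl {x : A} : Gen X x → Gen X xᶜ

/-- `X` generates the Boolean algebra `A`. -/
def Generates [BooleanAlgebra A] (X : Set A) : Prop := ∀ a : A, Gen X a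

/-!
Map `X` into the two-element algebra by the indicator of a set `S`. This map is `n`-preserving
as soon as no `≤ n` elements of `X ∩ S` meet in `⊥`, and then its homomorphic extension sends
every meet of elements of `X ∩ S` to `⊤` and every join of elements of `X \ S` to `⊥`, so such a
meet never lies below such a join. Each of the three independence clauses is an instance of this
separation: with `S = ∅` and the empty meet `⊤` for (⊥1), and with `S = F` for (⊥2)_n and (⊥3).
-/

section Separation

variable {α β : Type*}

noncomputable def boolIndicator [Top β] [Bot β] (S : Set α) (x : α) : β :=
  if x ∈ S then ⊤ else ⊥

theorem inf_boolIndicator_of_subset [SemilatticeInf β] [BoundedOrder β] {S : Set α}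
    {F : Finset α} (hF : ↑F ⊆ S) : F.inf (boolIndicator S : α → β) = ⊤ :=
  (Finset.inf_eq_top_iff _ _).mpr fun _ hx => if_pos (hF hx)

theorem sup_boolIndicator_of_disjoint [SemilatticeSup β] [BoundedOrder β]
    {S : Set α} {G : Finset α} (hG : ∀ x ∈ G, x ∉ S) : G.sup (boolIndicator S : α → β) = ⊥ :=
  (Finset.sup_eq_bot_iff _ _).mpr fun x hx => if_neg (hG x hx)

theorem map_finset_inf_id_of_eqOn [Lattice α] [BoundedOrder α] [Lattice β]
    [BoundedOrder β] {X : Set α} {f : α → β} {g : BoundedLatticeHom α β}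
    (hg : Set.EqOn g f X) {F : Finset α} (hF : ↑F ⊆ X) : g (F.inf id) = F.inf f := by
  rw [map_finset_inf]
  exact Finset.inf_congr rfl fun _ hx => hg (hF hx)

theorem map_finset_sup_id_of_eqOn [Lattice α] [BoundedOrder α] [Lattice β]
    [BoundedOrder β] {X : Set α} {f : α → β} {g : BoundedLatticeHom α β}
    (hg : Set.EqOn g f X) {G : Finset α} (hG : ↑G ⊆ X) : g (G.sup id) = G.sup f := by
  rw [map_finset_sup]
  exact Finset.sup_congr rfl fun _ hx => hg (hG hx)

variable {B : Type*} [BooleanAlgebra A] [BooleanAlgebra B]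

theorem nPreserving_boolIndicator {n : ℕ∞} {X S : Set A}
    (hS : ∀ H : Finset A, ↑H ⊆ X ∩ S → (H.card : ℕ∞) ≤ n → H.inf id ≠ ⊥) :
    NPreserving n X (boolIndicator S : A → B) := by
  intro H hHX hHn hH
  by_cases hHS : ↑H ⊆ S
  · exact absurd hH (hS H (Set.subset_inter hHX hHS) hHn)
  · obtain ⟨x, hxH, hxS⟩ := Set.not_subset.mp hHS
    exact le_bot_iff.mp ((Finset.inf_le hxH).trans (if_neg hxS).le)

theorem not_inf_le_sup_of_free [Nontrivial B] {n : ℕ∞} {X S : Set A}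
    (hfree : ∀ f : A → B, NPreserving n X f → ∃ g : BoundedLatticeHom A B, ∀ x ∈ X, g x = f x)
    (hS : ∀ H : Finset A, ↑H ⊆ X ∩ S → (H.card : ℕ∞) ≤ n → H.inf id ≠ ⊥)
    {F G : Finset A} (hF : ↑F ⊆ X ∩ S) (hG : ↑G ⊆ X \ S) : ¬ F.inf id ≤ G.sup id := by
  intro hle
  obtain ⟨g, hg⟩ := hfree _ (nPreserving_boolIndicator hS)
  have hinf : g (F.inf id) = ⊤ := by
    rw [map_finset_inf_id_of_eqOn (fun x hx => hg x hx) (hF.trans Set.inter_subset_left),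
      inf_boolIndicator_of_subset (hF.trans Set.inter_subset_right)]
  have hsup : g (G.sup id) = ⊥ := by
    rw [map_finset_sup_id_of_eqOn (fun x hx => hg x hx) (hG.trans Set.sdiff_subset),
      sup_boolIndicator_of_disjoint fun x hx => (hG hx).2]
  have hmono := OrderHomClass.mono g hle
  rw [hinf, hsup] at hmono
  exact top_ne_bot (le_bot_iff.mp hmono)

end Separation

theorem stmt_6.{u, v} {A : Type u} [BooleanAlgebra A] (n : ℕ) (hn : 0 < n) (X : Set A)
    (hgen : Generates X)
    (hfree : ∀ (B : Type v) [BooleanAlgebra B] [Nontrivial B] (f : A → B),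
        NPreserving (n : ℕ∞) X f →
        ∃ g : BoundedLatticeHom A B, ∀ x ∈ X, g x = f x) :
    NIndep (n : ℕ∞) (X \ {⊥}) := by
  -- `Set PUnit` is the two-element Boolean algebra, in the universe `v` that `hfree` quantifies over.
  have separate {S : Set A} := not_inf_le_sup_of_free (S := S) (hfree (Set PUnit.{v + 1}))
  refine ⟨fun h => h.2 rfl, ?_, ?_, ?_⟩
  · rintro F ⟨a, ha⟩ hFX hF
    have : Nontrivial A := ⟨⟨a, ⊥, (hFX ha).2⟩⟩
    exact separate (S := ∅) (F := ∅) (G := F) (by simp) (by simp)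
      (fun x hx => ⟨(hFX hx).1, id⟩) (by simp [hF])
  · intro F _ hFX hF
    by_contra! hsmall
    exact separate (S := F) (G := ∅)
      (fun H hH hHn => hsmall H (hH.trans Set.inter_subset_right) hHn)
      (fun x hx => ⟨(hFX hx).1, hx⟩) (by simp) (by simp [hF])
  · intro F G _ _ hFX hGX hF hle
    by_contra hFG
    exact separate (S := F)
      (fun H hH _ hH' => hF (eq_bot_mono (Finset.inf_mono (hH.trans Set.inter_subset_right)) hH'))
      (fun x hx => ⟨(hFX hx).1, hx⟩)
      (fun x hx => ⟨(hGX hx).1, fun hxF => hFG ⟨x, Finset.mem_inter.mpr ⟨hxF, hx⟩⟩⟩) hle
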